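/- arXiv:2103.00092 — 4 statements merged into one kernel-verified Lean document; each statement's English description precedes it below -/
import Mathlib

section
/- If Y ↔ X ↔ Z is a Markov chain, i.e., Y and Z are conditionally independent given X (P_{Y,Z|X=x} = P_{Y|X=x} ⊗ P_{Z|X=x} for every x), then H_L(Y|X,Z) = H_L(Y|X); equivalently, the generalized conditional mutual information I_L(Y;Z|X) = 0. -/
open Finset

/-- The generalized conditional entropy
H_L(Y|W) = Σ_w P_W(w) · min_{a ∈ 𝒜} E_{Y ∼ P_{Y|W=w}}[L(Y,a)]. -/
noncomputable def condEntropy {W 𝒴 𝒜 : Type} [Fintype W] [Fintype 𝒴] [Fintype 𝒜] [Nonempty 𝒜]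
    (L : 𝒴 → 𝒜 → ℝ) (p : W × 𝒴 → ℝ) : ℝ :=
  ∑ w, (∑ y, p (w, y)) *
    Finset.univ.inf' Finset.univ_nonempty
      (fun a : 𝒜 => ∑ y, (p (w, y) / ∑ y', p (w, y')) * L y a)

/-- If Y ↔ X ↔ Z is a Markov chain, i.e. Y and Z are conditionally
independent given X (expressed without division: P(x,z,y)·P_X(x) = P_{X,Y}(x,y)·P_{X,Z}(x,z)
for all x, y, z), then H_L(Y|X,Z) = H_L(Y|X), i.e., I_L(Y;Z|X) = 0.
Here `p` is the joint distribution of ((X,Z),Y). -/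
theorem condEntropy_pair_eq_condEntropy_of_markov
    {𝒳 𝒵 𝒴 𝒜 : Type} [Fintype 𝒳] [Fintype 𝒵] [Fintype 𝒴] [Fintype 𝒜] [Nonempty 𝒜]
    (L : 𝒴 → 𝒜 → ℝ) (p : (𝒳 × 𝒵) × 𝒴 → ℝ)
    (hp0 : ∀ s, 0 ≤ p s) (hp1 : ∑ s, p s = 1)
    (hpX : ∀ x : 𝒳, 0 < ∑ z, ∑ y, p ((x, z), y))
    (hpXZ : ∀ (x : 𝒳) (z : 𝒵), 0 < ∑ y, p ((x, z), y))
    (hMarkov : ∀ (x : 𝒳) (z : 𝒵) (y : 𝒴),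
      p ((x, z), y) * (∑ z', ∑ y', p ((x, z'), y'))
        = (∑ z', p ((x, z'), y)) * (∑ y', p ((x, z), y'))) :
    condEntropy L p = condEntropy L (fun s : 𝒳 × 𝒴 => ∑ z, p ((s.1, z), s.2)) := by
  unfold condEntropy
  rw [Fintype.sum_prod_type]
  refine Finset.sum_congr rfl fun x _ => ?_
  have hSpos := hpX x
  have hinf : ∀ z : 𝒵,
      (Finset.univ.inf' Finset.univ_nonempty
        (fun a : 𝒜 => ∑ y, (p ((x, z), y) / ∑ y', p ((x, z), y')) * L y a))
      = (Finset.univ.inf' Finset.univ_nonempty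
        (fun a : 𝒜 => ∑ y, ((∑ z', p ((x, z'), y)) /
            ∑ y', ∑ z', p ((x, z'), y')) * L y a)) := by
    intro z
    congr 1
    funext a
    refine Finset.sum_congr rfl fun y _ => ?_
    congr 1
    have hden : (∑ y', ∑ z', p ((x, z'), y')) = ∑ z', ∑ y', p ((x, z'), y') :=
      Finset.sum_comm
    rw [hden, div_eq_div_iff (ne_of_gt (hpXZ x z)) (ne_of_gt hSpos)]
    exact hMarkov x z y
  simp only [hinf]
  rw [← Finset.sum_mul]
  congr 1
  exact Finset.sum_comm
end

section
/- Data processing inequality for generalized entropy: if Y ↔ X ↔ Z is a Markov chain, i.e., Y and Z are conditionally independent given X, then H_L(Y|X) ≤ H_L(Y|Z); equivalently, I_L(Y;Z) ≤ I_L(Y;X). -/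
open Finset

lemma mul_inf'_aux {α : Type} (s : Finset α) (hs : s.Nonempty) (c : ℝ) (hc : 0 ≤ c)
    (f : α → ℝ) : c * s.inf' hs f = s.inf' hs (fun a => c * f a) := by
  apply le_antisymm
  · apply Finset.le_inf'
    intro a ha
    exact mul_le_mul_of_nonneg_left (Finset.inf'_le f ha) hc
  · obtain ⟨a, ha, hEq⟩ := Finset.exists_mem_eq_inf' hs f
    calc s.inf' hs (fun a => c * f a) ≤ c * f a := Finset.inf'_le _ ha
      _ = c * s.inf' hs f := by rw [hEq]

/-- Data processing inequality for generalized entropy: if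
Y ↔ X ↔ Z is a Markov chain (Y and Z conditionally independent given X, expressed
without division as P(x,z,y)·P_X(x) = P_{X,Y}(x,y)·P_{X,Z}(x,z)), then
H_L(Y|X) ≤ H_L(Y|Z); equivalently I_L(Y;Z) ≤ I_L(Y;X).
Here `p` is the joint distribution of ((X,Z),Y). -/
theorem data_processing_inequality
    {𝒳 𝒵 𝒴 𝒜 : Type} [Fintype 𝒳] [Fintype 𝒵] [Fintype 𝒴] [Fintype 𝒜] [Nonempty 𝒜]
    (L : 𝒴 → 𝒜 → ℝ) (p : (𝒳 × 𝒵) × 𝒴 → ℝ)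
    (hp0 : ∀ s, 0 ≤ p s) (hp1 : ∑ s, p s = 1)
    (hpX : ∀ x : 𝒳, 0 < ∑ z, ∑ y, p ((x, z), y))
    (hpZ : ∀ z : 𝒵, 0 < ∑ x, ∑ y, p ((x, z), y))
    (hMarkov : ∀ (x : 𝒳) (z : 𝒵) (y : 𝒴),
      p ((x, z), y) * (∑ z', ∑ y', p ((x, z'), y'))
        = (∑ z', p ((x, z'), y)) * (∑ y', p ((x, z), y'))) :
    condEntropy L (fun s : 𝒳 × 𝒴 => ∑ z, p ((s.1, z), s.2))
      ≤ condEntropy L (fun s : 𝒵 × 𝒴 => ∑ x, p ((x, s.1), s.2)) := by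
  classical
  have hA : (Finset.univ : Finset 𝒜).Nonempty := Finset.univ_nonempty
  -- marginal of X
  set PX : 𝒳 → ℝ := fun x => ∑ z, ∑ y, p ((x, z), y) with hPXdef
  have hPXalt : ∀ x, (∑ y, ∑ z, p ((x, z), y)) = PX x := fun x => Finset.sum_comm 
  -- per-x expected loss and its minimum
  set h : 𝒳 → 𝒜 → ℝ := fun x a => ∑ y, ((∑ z, p ((x, z), y)) / PX x) * L y a with hhdef
  set f : 𝒳 → ℝ := fun x => Finset.univ.inf' hA (h x) with hfdef
  have hfle : ∀ x a, f x ≤ h x a := fun x a => Finset.inf'_le _ (Finset.mem_univ a)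
  -- key: the (x,z) slice of expected loss is proportional to h x a
  have key : ∀ (x : 𝒳) (z : 𝒵) (a : 𝒜),
      (∑ y, p ((x, z), y) * L y a) = (∑ y, p ((x, z), y)) * h x a := by
    intro x z a
    rw [hhdef]
    simp only []
    rw [Finset.mul_sum]
    apply Finset.sum_congr rfl
    intro y _
    have hM := hMarkov x z y
    have hPXne : PX x ≠ 0 := ne_of_gt (hpX x)
    have hp : p ((x, z), y) = (∑ z', p ((x, z'), y)) * (∑ y', p ((x, z), y')) / PX x := by
      field_simp
      linarith [hM]
    rw [hp]
    ring
  -- rewrite LHS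
  unfold condEntropy
  have hL : (∑ x, (∑ y, ∑ z, p ((x, z), y)) *
      Finset.univ.inf' Finset.univ_nonempty
        (fun a : 𝒜 => ∑ y, ((∑ z, p ((x, z), y)) / ∑ y', ∑ z, p ((x, z), y')) * L y a))
      = ∑ x, PX x * f x := by
    apply Finset.sum_congr rfl
    intro x _
    rw [hPXalt x]
  rw [hL]
  -- lower bound each z-term of the RHS
  have hterm : ∀ z : 𝒵,
      (∑ x, (∑ y, p ((x, z), y)) * f x)
        ≤ (∑ y, ∑ x, p ((x, z), y)) *
          Finset.univ.inf' Finset.univ_nonempty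
            (fun a : 𝒜 => ∑ y, ((∑ x, p ((x, z), y)) / ∑ y', ∑ x, p ((x, z), y')) * L y a) := by
    intro z
    have hPZalt : (∑ y, ∑ x, p ((x, z), y)) = ∑ x, ∑ y, p ((x, z), y) :=
      Finset.sum_comm
    have hPZpos : (0:ℝ) < ∑ y, ∑ x, p ((x, z), y) := hPZalt ▸ hpZ z
    have hPZne : (∑ y', ∑ x, p ((x, z), y')) ≠ 0 := ne_of_gt hPZpos
    rw [mul_inf'_aux _ _ _ (le_of_lt hPZpos)]
    apply Finset.le_inf'
    intro a _
    have heq : (∑ y', ∑ x, p ((x, z), y')) *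
        (∑ y, ((∑ x, p ((x, z), y)) / ∑ y', ∑ x, p ((x, z), y')) * L y a)
        = ∑ x, (∑ y, p ((x, z), y)) * h x a := by
      rw [Finset.mul_sum]
      have : ∀ y : 𝒴, (∑ y', ∑ x, p ((x, z), y')) *
          (((∑ x, p ((x, z), y)) / ∑ y', ∑ x, p ((x, z), y')) * L y a)
          = ∑ x, p ((x, z), y) * L y a := by
        intro y
        rw [← Finset.sum_mul, div_mul_eq_mul_div, mul_div_assoc']
        exact mul_div_cancel_left₀ _ hPZne
      rw [Finset.sum_congr rfl (fun y _ => this y), Finset.sum_comm]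
      exact Finset.sum_congr rfl (fun x _ => key x z a)
    rw [heq]
    apply Finset.sum_le_sum
    intro x _
    exact mul_le_mul_of_nonneg_left (hfle x a)
      (Finset.sum_nonneg (fun y _ => hp0 _))
  calc (∑ x, PX x * f x)
      = ∑ z, ∑ x, (∑ y, p ((x, z), y)) * f x := by
        rw [Finset.sum_comm]
        apply Finset.sum_congr rfl
        intro x _
        rw [hPXdef]
        simp only []
        rw [← Finset.sum_mul]
    _ ≤ _ := Finset.sum_le_sum (fun z _ => hterm z)
end

section
/- Conditional-distribution perturbation bound: let P̃ and P be probability distributions on a finite product set 𝒳 × 𝒴 with P strictly positive, and set p = min_{x ∈ 𝒳} P_X(x) > 0. If D_{χ²}(P̃ || P) ≤ β² for some β with 0 ≤ β ≤ p/2, then P̃_X(x) ≥ p/2 > 0 for every x, and for all x ∈ 𝒳 and y ∈ 𝒴, |P̃_{Y|X}(y|x) − P_{Y|X}(y|x)| ≤ 4β/p, where P_{Y|X}(y|x) = P(x,y)/P_X(x) and P̃_{Y|X}(y|x) = P̃(x,y)/P̃_X(x). -/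
open Finset

/-- Neyman's χ²-divergence D_{χ²}(P || Q) = Σ_s (P(s) − Q(s))² / Q(s) on a finite set. -/
noncomputable def chiSq {S : Type} [Fintype S] (P Q : S → ℝ) : ℝ :=
  ∑ s, (P s - Q s) ^ 2 / Q s

/-!
By Cauchy–Schwarz, `(∑_{s ∈ T} (P̃ s - P s))² ≤ D_{χ²}(P̃ ‖ P) · P(T) ≤ β²` for every event `T`.
Taking `T` a single point and `T` a fibre `{x} × 𝒴` moves both the numerator `P(x, y)` and the
denominator `P_X(x) ≥ p` of `P_{Y|X}(y|x)` by at most `β ≤ p / 2`, and the quotient of such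
perturbations moves by at most `2β / (p / 2)`.
-/

section ChiSq

variable {S : Type} [Fintype S] {P Q : S → ℝ}

theorem sq_sum_sub_le_chiSq_mul_sum (hQ : ∀ s, 0 < Q s) (T : Finset S) :
    (∑ s ∈ T, (P s - Q s)) ^ 2 ≤ chiSq P Q * ∑ s ∈ T, Q s := by
  have hterm : ∀ s, 0 ≤ (P s - Q s) ^ 2 / Q s := fun s => div_nonneg (sq_nonneg _) (hQ s).le
  calc (∑ s ∈ T, (P s - Q s)) ^ 2
      ≤ (∑ s ∈ T, (P s - Q s) ^ 2 / Q s) * ∑ s ∈ T, Q s :=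
        sum_sq_le_sum_mul_sum_of_sq_le_mul T (fun s _ => hterm s) (fun s _ => (hQ s).le)
          fun s _ => (div_mul_cancel₀ _ (hQ s).ne').ge
    _ ≤ chiSq P Q * ∑ s ∈ T, Q s := by
        gcongr
        · exact sum_nonneg fun s _ => (hQ s).le
        · exact sum_le_univ_sum_of_nonneg hterm

theorem abs_sum_sub_le_of_chiSq_le {β : ℝ} (hQ : ∀ s, 0 < Q s) (hQ1 : ∑ s, Q s = 1)
    (hβ : 0 ≤ β) (hD : chiSq P Q ≤ β ^ 2) (T : Finset S) :
    |∑ s ∈ T, (P s - Q s)| ≤ β := by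
  refine abs_le_of_sq_le_sq ?_ hβ
  have hT : ∑ s ∈ T, Q s ≤ 1 := hQ1 ▸ sum_le_univ_sum_of_nonneg fun s => (hQ s).le
  have hD0 : 0 ≤ chiSq P Q := sum_nonneg fun s _ => div_nonneg (sq_nonneg _) (hQ s).le
  calc (∑ s ∈ T, (P s - Q s)) ^ 2 ≤ chiSq P Q * ∑ s ∈ T, Q s := sq_sum_sub_le_chiSq_mul_sum hQ T
    _ ≤ chiSq P Q * 1 := by gcongr
    _ ≤ β ^ 2 := by rwa [mul_one]

end ChiSq

theorem abs_div_sub_div_le {a b A B β m : ℝ} (hB : 0 < B) (hbB : |b| ≤ B) (hm : 0 < m)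
    (hmA : m ≤ A) (hab : |a - b| ≤ β) (hAB : |A - B| ≤ β) :
    |a / A - b / B| ≤ 2 * β / m := by
  have hA : 0 < A := hm.trans_le hmA
  have hβ : 0 ≤ β := (abs_nonneg _).trans hab
  have hsplit : a / A - b / B = (a - b) / A + b / B * ((B - A) / A) := by
    field_simp
    ring
  have hfirst : |(a - b) / A| ≤ β / m := by
    rw [abs_div, abs_of_pos hA]
    exact div_le_div₀ hβ hab hm hmA
  have hsecond : |b / B * ((B - A) / A)| ≤ β / m := by
    rw [abs_mul, abs_div, abs_div, abs_of_pos hA, abs_of_pos hB, abs_sub_comm]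
    calc |b| / B * (|A - B| / A) ≤ 1 * (β / m) := by
          gcongr
          exact div_le_one_of_le₀ hbB hB.le
      _ = β / m := one_mul _
  calc |a / A - b / B| ≤ |(a - b) / A| + |b / B * ((B - A) / A)| := hsplit ▸ abs_add_le _ _
    _ ≤ β / m + β / m := add_le_add hfirst hsecond
    _ = 2 * β / m := by ring

theorem conditional_distribution_perturbation_bound_general
    {𝒳 𝒴 : Type} [Fintype 𝒳] [Fintype 𝒴] [Nonempty 𝒳]
    (Pt P : 𝒳 × 𝒴 → ℝ)
    (hP0 : ∀ s, 0 < P s) (hP1 : ∑ s, P s = 1)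
    (p : ℝ)
    (hp : p = Finset.univ.inf' Finset.univ_nonempty (fun x : 𝒳 => ∑ y, P (x, y)))
    (β : ℝ) (hβ0 : 0 ≤ β) (hβp : β ≤ p / 2) (hD : chiSq Pt P ≤ β ^ 2) :
    (0 < p / 2) ∧ (∀ x : 𝒳, p / 2 ≤ ∑ y, Pt (x, y)) ∧
      ∀ (x : 𝒳) (y : 𝒴),
        |Pt (x, y) / (∑ y', Pt (x, y')) - P (x, y) / (∑ y', P (x, y'))| ≤ 4 * β / p := by
  obtain ⟨s₀, -, -⟩ := exists_ne_zero_of_sum_ne_zero (hP1 ▸ one_ne_zero : ∑ s, P s ≠ 0)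
  have : Nonempty 𝒴 := ⟨s₀.2⟩
  have hPX : ∀ x, p ≤ ∑ y, P (x, y) := fun x => hp ▸ inf'_le _ (mem_univ x)
  have hp0 : 0 < p := hp ▸ (lt_inf'_iff _).2 fun x _ => sum_pos (fun y _ => hP0 _) univ_nonempty
  have hdev := abs_sum_sub_le_of_chiSq_le hP0 hP1 hβ0 hD
  have hmarg : ∀ x, |∑ y, Pt (x, y) - ∑ y, P (x, y)| ≤ β := fun x => by
    simpa [sum_product, sum_sub_distrib] using hdev ({x} ×ˢ univ)
  have hPtX : ∀ x, p / 2 ≤ ∑ y, Pt (x, y) := fun x => by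
    linarith [(abs_le.1 (hmarg x)).1, hPX x]
  refine ⟨half_pos hp0, hPtX, fun x y => ?_⟩
  have hPxy : |P (x, y)| ≤ ∑ y', P (x, y') := by
    rw [abs_of_pos (hP0 _)]
    exact single_le_sum (f := fun y' => P (x, y')) (fun y' _ => (hP0 _).le) (mem_univ y)
  calc _ ≤ 2 * β / (p / 2) :=
        abs_div_sub_div_le (hp0.trans_le (hPX x)) hPxy (half_pos hp0) (hPtX x)
          (by simpa using hdev {(x, y)}) (hmarg x)
    _ = 4 * β / p := by field_simp; ring

/-- Conditional-distribution perturbation bound: let P̃ and P be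
probability distributions on a finite product set 𝒳 × 𝒴 with P strictly positive
and p = min_x P_X(x) > 0. If D_{χ²}(P̃ || P) ≤ β² for some 0 ≤ β ≤ p/2, then
P̃_X(x) ≥ p/2 > 0 for every x, and for all x, y,
|P̃_{Y|X}(y|x) − P_{Y|X}(y|x)| ≤ 4β/p. -/
theorem conditional_distribution_perturbation_bound
    {𝒳 𝒴 : Type} [Fintype 𝒳] [Fintype 𝒴] [Nonempty 𝒳]
    (Pt P : 𝒳 × 𝒴 → ℝ)
    (hPt0 : ∀ s, 0 ≤ Pt s) (hPt1 : ∑ s, Pt s = 1)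
    (hP0 : ∀ s, 0 < P s) (hP1 : ∑ s, P s = 1)
    (p : ℝ)
    (hp : p = Finset.univ.inf' Finset.univ_nonempty (fun x : 𝒳 => ∑ y, P (x, y)))
    (β : ℝ) (hβ0 : 0 ≤ β) (hβp : β ≤ p / 2) (hD : chiSq Pt P ≤ β ^ 2) :
    (0 < p / 2) ∧ (∀ x : 𝒳, p / 2 ≤ ∑ y, Pt (x, y)) ∧
      ∀ (x : 𝒳) (y : 𝒴),
        |Pt (x, y) / (∑ y', Pt (x, y')) - P (x, y) / (∑ y', P (x, y'))| ≤ 4 * β / p :=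
  conditional_distribution_perturbation_bound_general Pt P hP0 hP1 p hp β hβ0 hβp hD
end

section
/- Continuity of the conditional cross entropy (Lemma 2): let P̃ and P be probability distributions on a finite product set 𝒳 × 𝒴 with P strictly positive, let L : 𝒴 × 𝒜 → ℝ be a loss function with |L(y,a)| ≤ M for all y, a, and for each x ∈ 𝒳 fix a Bayes action a_x ∈ argmin_{a ∈ 𝒜} Σ_y P_{Y|X}(y|x) L(y,a). Define the generalized conditional cross entropy H_L(Ỹ; Y | X̃) = Σ_{x,y} P̃(x,y) L(y, a_x) and the generalized conditional entropy H_L(Y|X) = Σ_x P_X(x) min_{a ∈ 𝒜} Σ_y P_{Y|X}(y|x) L(y,a). If D_{χ²}(P̃ || P) ≤ β², then |H_L(Ỹ; Y | X̃) − H_L(Y|X)| ≤ M·β. -/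
open Finset

/-- **Lemma 2: continuity of the conditional cross entropy.**
Let P̃ and P be probability distributions on 𝒳 × 𝒴 with P strictly positive,
|L(y,a)| ≤ M, and for each x let a_x be a Bayes action for P_{Y|X=x}. If
D_{χ²}(P̃ || P) ≤ β², then the generalized conditional cross entropy
H_L(Ỹ; Y | X̃) = Σ_{x,y} P̃(x,y) L(y, a_x) and the generalized conditional entropy
H_L(Y|X) = Σ_x P_X(x) min_a Σ_y P_{Y|X}(y|x) L(y,a) satisfy
|H_L(Ỹ; Y | X̃) − H_L(Y|X)| ≤ M·β. -/
theorem cross_entropy_continuity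
    {𝒳 𝒴 𝒜 : Type} [Fintype 𝒳] [Fintype 𝒴] [Fintype 𝒜] [Nonempty 𝒜]
    (L : 𝒴 → 𝒜 → ℝ) (M : ℝ) (hM : ∀ y a, |L y a| ≤ M)
    (Pt P : 𝒳 × 𝒴 → ℝ)
    (hPt0 : ∀ s, 0 ≤ Pt s) (hPt1 : ∑ s, Pt s = 1)
    (hP0 : ∀ s, 0 < P s) (hP1 : ∑ s, P s = 1)
    (bayes : 𝒳 → 𝒜)
    (hBayes : ∀ (x : 𝒳) (a : 𝒜),
      ∑ y, (P (x, y) / ∑ y', P (x, y')) * L y (bayes x)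
        ≤ ∑ y, (P (x, y) / ∑ y', P (x, y')) * L y a)
    (β : ℝ) (hβ : 0 ≤ β) (hD : chiSq Pt P ≤ β ^ 2) :
    |(∑ s : 𝒳 × 𝒴, Pt s * L s.2 (bayes s.1))
        - ∑ x, (∑ y, P (x, y)) *
            Finset.univ.inf' Finset.univ_nonempty
              (fun a : 𝒜 => ∑ y, (P (x, y) / ∑ y', P (x, y')) * L y a)|
      ≤ M * β := by
  classical
  have hSne : Nonempty (𝒳 × 𝒴) := by
    by_contra h
    rw [not_nonempty_iff] at h
    simp [Finset.univ_eq_empty] at hP1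
  obtain ⟨⟨x0, y0⟩⟩ := hSne
  have hM0 : 0 ≤ M := le_trans (abs_nonneg _) (hM y0 (bayes x0))
  have hPx : ∀ x : 𝒳, 0 < ∑ y, P (x, y) := fun x =>
    Finset.sum_pos (fun y _ => hP0 (x, y)) ⟨y0, Finset.mem_univ y0⟩
  have hinf : ∀ x, Finset.univ.inf' Finset.univ_nonempty
      (fun a : 𝒜 => ∑ y, (P (x, y) / ∑ y', P (x, y')) * L y a)
      = ∑ y, (P (x, y) / ∑ y', P (x, y')) * L y (bayes x) := by
    intro x
    apply le_antisymm
    · exact Finset.inf'_le _ (Finset.mem_univ _)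
    · exact Finset.le_inf' _ _ (fun a _ => hBayes x a)
  have hsecond : ∑ x, (∑ y, P (x, y)) *
      Finset.univ.inf' Finset.univ_nonempty
        (fun a : 𝒜 => ∑ y, (P (x, y) / ∑ y', P (x, y')) * L y a)
      = ∑ s : 𝒳 × 𝒴, P s * L s.2 (bayes s.1) := by
    rw [Fintype.sum_prod_type]
    refine Finset.sum_congr rfl fun x _ => ?_
    rw [hinf x, Finset.mul_sum]
    refine Finset.sum_congr rfl fun y _ => ?_
    have h := (hPx x).ne'
    field_simp
  rw [hsecond, ← Finset.sum_sub_distrib]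
  have hdiff : ∀ s : 𝒳 × 𝒴, Pt s * L s.2 (bayes s.1) - P s * L s.2 (bayes s.1)
      = ((Pt s - P s) / Real.sqrt (P s)) * (Real.sqrt (P s) * L s.2 (bayes s.1)) := by
    intro s
    have h : Real.sqrt (P s) ≠ 0 := ne_of_gt (Real.sqrt_pos.mpr (hP0 s))
    field_simp
  have hcs := Finset.sum_mul_sq_le_sq_mul_sq Finset.univ
    (fun s : 𝒳 × 𝒴 => (Pt s - P s) / Real.sqrt (P s))
    (fun s : 𝒳 × 𝒴 => Real.sqrt (P s) * L s.2 (bayes s.1))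
  have h1 : ∑ s : 𝒳 × 𝒴, ((Pt s - P s) / Real.sqrt (P s)) ^ 2 = chiSq Pt P := by
    refine Finset.sum_congr rfl fun s _ => ?_
    rw [div_pow, Real.sq_sqrt (hP0 s).le]
  have h2 : ∑ s : 𝒳 × 𝒴, (Real.sqrt (P s) * L s.2 (bayes s.1)) ^ 2 ≤ M ^ 2 := by
    calc ∑ s : 𝒳 × 𝒴, (Real.sqrt (P s) * L s.2 (bayes s.1)) ^ 2
        ≤ ∑ s : 𝒳 × 𝒴, P s * M ^ 2 := by
          refine Finset.sum_le_sum fun s _ => ?_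
          rw [mul_pow, Real.sq_sqrt (hP0 s).le]
          exact mul_le_mul_of_nonneg_left
            (by rw [← sq_abs]; exact pow_le_pow_left₀ (abs_nonneg _) (hM _ _) 2)
            (hP0 s).le
      _ = M ^ 2 := by rw [← Finset.sum_mul, hP1, one_mul]
  have hsq : (∑ s : 𝒳 × 𝒴, (Pt s * L s.2 (bayes s.1) - P s * L s.2 (bayes s.1))) ^ 2
      ≤ (M * β) ^ 2 := by
    calc (∑ s : 𝒳 × 𝒴, (Pt s * L s.2 (bayes s.1) - P s * L s.2 (bayes s.1))) ^ 2
        = (∑ s : 𝒳 × 𝒴, ((Pt s - P s) / Real.sqrt (P s)) *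
            (Real.sqrt (P s) * L s.2 (bayes s.1))) ^ 2 := by
          congr 1; exact Finset.sum_congr rfl fun s _ => hdiff s
      _ ≤ (∑ s : 𝒳 × 𝒴, ((Pt s - P s) / Real.sqrt (P s)) ^ 2) *
            ∑ s : 𝒳 × 𝒴, (Real.sqrt (P s) * L s.2 (bayes s.1)) ^ 2 := hcs
      _ ≤ β ^ 2 * M ^ 2 := by
          refine mul_le_mul (h1 ▸ hD) h2 ?_ (by positivity)
          · exact Finset.sum_nonneg fun s _ => sq_nonneg _
      _ = (M * β) ^ 2 := by ring
  have := Real.sqrt_le_sqrt hsq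
  rwa [Real.sqrt_sq_eq_abs, Real.sqrt_sq (by positivity)] at this
end
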